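/- arXiv:2206.11539 — 4 statements merged into one kernel-verified Lean document; each statement's English description precedes it below -/
import Mathlib

section
/- With Σ_f a CNF equivalent to f and x an instance with f(x) = false, a subset S ⊆ Fin n of unit clauses of Σ_x is a MUS of the partial Max-SAT problem (hard clauses Σ_f, soft clauses Σ_x) if and only if S is a sufficient reason for the prediction f(x) = false, i.e., every assignment agreeing with x on S is classified false, and no proper subset of S has this property. -/
/-- Satisfaction of a clause (a finite set of literals `(var, polarity)`). -/
def SatClause {n : ℕ} (x : Fin n → Bool) (c : Finset (Fin n × Bool)) : Prop :=
  ∃ l ∈ c, x l.1 = l.2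

/-- Satisfaction of a CNF (a finite set of clauses). -/
def SatCNF {n : ℕ} (x : Fin n → Bool) (Sf : Finset (Finset (Fin n × Bool))) : Prop :=
  ∀ c ∈ Sf, SatClause x c

/-- A CNF is satisfiable if some assignment satisfies it. -/
def CNFSat {n : ℕ} (Sf : Finset (Finset (Fin n × Bool))) : Prop :=
  ∃ x, SatCNF x Sf

/-- The unit clauses fixing the variables in `S` to their values in `x`. -/
def unitClauses {n : ℕ} (x : Fin n → Bool) (S : Finset (Fin n)) :
    Finset (Finset (Fin n × Bool)) :=
  S.image (fun i => {(i, x i)})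

/-- `flipS x S` flips the values of `x` on the variables in `S`. -/
def flipS {n : ℕ} (x : Fin n → Bool) (S : Finset (Fin n)) : Fin n → Bool :=
  fun i => if i ∈ S then !(x i) else x i

lemma sat_union_iff {n : ℕ} (Sf : Finset (Finset (Fin n × Bool)))
    (x : Fin n → Bool) (S : Finset (Fin n)) :
    CNFSat (Sf ∪ unitClauses x S) ↔
      ∃ x' : Fin n → Bool, (∀ i ∈ S, x' i = x i) ∧ SatCNF x' Sf := by
  constructor
  · rintro ⟨y, hy⟩
    refine ⟨y, fun i hi => ?_, fun c hc => hy c (Finset.mem_union_left _ hc)⟩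
    have := hy {(i, x i)} (Finset.mem_union_right _ (Finset.mem_image.2 ⟨i, hi, rfl⟩))
    obtain ⟨l, hl, hv⟩ := this
    simp at hl
    rw [hl] at hv
    exact hv
  · rintro ⟨y, hagree, hsat⟩
    refine ⟨y, fun c hc => ?_⟩
    rcases Finset.mem_union.1 hc with h | h
    · exact hsat c h
    · obtain ⟨i, hi, rfl⟩ := Finset.mem_image.1 h
      exact ⟨(i, x i), Finset.mem_singleton_self _, hagree i hi⟩

theorem stmt3 {n : ℕ} (f : (Fin n → Bool) → Bool)
    (Sf : Finset (Finset (Fin n × Bool)))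
    (hequiv : ∀ x : Fin n → Bool, f x = true ↔ SatCNF x Sf)
    (x : Fin n → Bool) (hx : f x = false) (S : Finset (Fin n)) :
    (¬ CNFSat (Sf ∪ unitClauses x S) ∧
        ∀ S' ⊂ S, CNFSat (Sf ∪ unitClauses x S')) ↔
      ((∀ x' : Fin n → Bool, (∀ i ∈ S, x' i = x i) → f x' = false) ∧
        ∀ S' ⊂ S,
          ¬ (∀ x' : Fin n → Bool, (∀ i ∈ S', x' i = x i) → f x' = false)) := by
  have key : ∀ T : Finset (Fin n),
      (¬ CNFSat (Sf ∪ unitClauses x T)) ↔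
        ∀ x' : Fin n → Bool, (∀ i ∈ T, x' i = x i) → f x' = false := by
    intro T
    rw [sat_union_iff]
    push_neg
    constructor
    · intro h x' hx'
      have := h x' hx'
      rw [← hequiv] at this
      simpa using this
    · intro h x' hx'
      have := h x' hx'
      rw [← hequiv] at *
      simp [this]
  constructor
  · rintro ⟨h1, h2⟩
    exact ⟨(key S).1 h1, fun S' hS' => by
      have := h2 S' hS'
      rw [← key S']
      exact not_not.2 this⟩
  · rintro ⟨h1, h2⟩
    refine ⟨(key S).2 h1, fun S' hS' => ?_⟩
    have := h2 S' hS'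
    rw [← key S'] at this
    exact not_not.1 this
end

section
/- With Σ_f a CNF equivalent to f and x an instance with f(x) = false, consider the partial Max-SAT problem with hard clauses Σ_f and soft clauses Σ_x. A subset S ⊆ Fin n is an MCS of this problem if and only if Σ_f ∪ Σ_{x restricted to complement of S} is satisfiable and, for every proper subset S' ⊂ S, Σ_f ∪ Σ_{x restricted to complement of S'} is unsatisfiable. This holds if and only if there exists an assignment agreeing with x outside S that f classifies as true, and for no proper subset S' ⊂ S does such an assignment (agreeing with x outside S') exist. -/
lemma key {n : ℕ} (f : (Fin n → Bool) → Bool)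
    (Sf : Finset (Finset (Fin n × Bool)))
    (hequiv : ∀ x : Fin n → Bool, f x = true ↔ SatCNF x Sf)
    (x : Fin n → Bool) (S : Finset (Fin n)) :
    CNFSat (Sf ∪ unitClauses x Sᶜ) ↔
      ∃ x' : Fin n → Bool, (∀ i ∉ S, x' i = x i) ∧ f x' = true := by
  constructor
  · rintro ⟨x', hx'⟩
    refine ⟨x', fun i hi => ?_, (hequiv x').2 fun c hc => hx' c (Finset.mem_union_left _ hc)⟩
    have := hx' {(i, x i)} (Finset.mem_union_right _
      (Finset.mem_image.2 ⟨i, Finset.mem_compl.2 hi, rfl⟩))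
    obtain ⟨l, hl, hxl⟩ := this
    simp only [Finset.mem_singleton] at hl
    subst hl; exact hxl
  · rintro ⟨x', hagree, hfx⟩
    refine ⟨x', fun c hc => ?_⟩
    rcases Finset.mem_union.1 hc with h | h
    · exact (hequiv x').1 hfx c h
    · obtain ⟨i, hi, rfl⟩ := Finset.mem_image.1 h
      exact ⟨(i, x i), Finset.mem_singleton_self _, hagree i (Finset.mem_compl.1 hi)⟩

theorem stmt4 {n : ℕ} (f : (Fin n → Bool) → Bool)
    (Sf : Finset (Finset (Fin n × Bool)))
    (hequiv : ∀ x : Fin n → Bool, f x = true ↔ SatCNF x Sf)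
    (x : Fin n → Bool) (hx : f x = false) (S : Finset (Fin n)) :
    ((CNFSat (Sf ∪ unitClauses x Sᶜ) ∧
        ∀ S' ⊂ S, ¬ CNFSat (Sf ∪ unitClauses x S'ᶜ)) ↔
      ((∃ x' : Fin n → Bool, (∀ i ∉ S, x' i = x i) ∧ f x' = true) ∧
        ∀ S' ⊂ S,
          ¬ ∃ x' : Fin n → Bool, (∀ i ∉ S', x' i = x i) ∧ f x' = true)) := by
  constructor
  · rintro ⟨h1, h2⟩
    exact ⟨(key f Sf hequiv x S).1 h1, fun S' hS' h =>
      h2 S' hS' ((key f Sf hequiv x S').2 h)⟩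
  · rintro ⟨h1, h2⟩
    exact ⟨(key f Sf hequiv x S).2 h1, fun S' hS' h =>
      h2 S' hS' ((key f Sf hequiv x S').1 h)⟩
end

section
/- Hitting-set duality for explanations: with Σ_f equivalent to f and f(x) = false, a subset S ⊆ Fin n is a minimal unsatisfiable subset (sufficient reason) iff S is a minimal hitting set of the collection of all MCSes (counterfactuals), where minimality is with respect to set inclusion. -/
/-- `S` is a MUS of the partial Max-SAT problem with hard clauses `Sf` and soft
unit clauses fixing `x`. -/
def IsMUS {n : ℕ} (Sf : Finset (Finset (Fin n × Bool))) (x : Fin n → Bool)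
    (S : Finset (Fin n)) : Prop :=
  ¬ CNFSat (Sf ∪ unitClauses x S) ∧ ∀ S' ⊂ S, CNFSat (Sf ∪ unitClauses x S')

/-- `S` is an MCS of the partial Max-SAT problem with hard clauses `Sf` and soft
unit clauses fixing `x`. -/
def IsMCS {n : ℕ} (Sf : Finset (Finset (Fin n × Bool))) (x : Fin n → Bool)
    (S : Finset (Fin n)) : Prop :=
  CNFSat (Sf ∪ unitClauses x Sᶜ) ∧ ∀ S' ⊂ S, ¬ CNFSat (Sf ∪ unitClauses x S'ᶜ)

/-- `S` hits every member of the collection of all MCSes. -/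
def HitsAllMCS {n : ℕ} (Sf : Finset (Finset (Fin n × Bool))) (x : Fin n → Bool)
    (S : Finset (Fin n)) : Prop :=
  ∀ C : Finset (Fin n), IsMCS Sf x C → (S ∩ C).Nonempty

theorem sat_mono {n : ℕ} (Sf : Finset (Finset (Fin n × Bool))) (x : Fin n → Bool)
    {S T : Finset (Fin n)} (h : S ⊆ T) :
    CNFSat (Sf ∪ unitClauses x T) → CNFSat (Sf ∪ unitClauses x S) := by
  rintro ⟨y, hy⟩
  refine ⟨y, fun c hc => hy c ?_⟩
  rw [Finset.mem_union] at hc ⊢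
  rcases hc with h1 | h2
  · exact Or.inl h1
  · exact Or.inr (Finset.image_subset_image h h2)

theorem keyA {n : ℕ} (Sf : Finset (Finset (Fin n × Bool))) (x : Fin n → Bool)
    (S : Finset (Fin n)) :
    ¬ CNFSat (Sf ∪ unitClauses x S) ↔ HitsAllMCS Sf x S := by
  constructor
  · intro hns C hC
    by_contra h
    rw [Finset.not_nonempty_iff_eq_empty] at h
    have hsub : S ⊆ Cᶜ := by
      intro i hi
      rw [Finset.mem_compl]
      intro hiC
      have : i ∈ S ∩ C := Finset.mem_inter.mpr ⟨hi, hiC⟩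
      rw [h] at this
      exact absurd this (Finset.notMem_empty i)
    exact hns (sat_mono Sf x hsub hC.1)
  · intro hhit
    by_contra hsat

    set fam : Set (Finset (Fin n)) :=
      {C | C ⊆ Sᶜ ∧ CNFSat (Sf ∪ unitClauses x Cᶜ)} with hfam
    have hne : fam.Nonempty := ⟨Sᶜ, le_refl _, by simpa using hsat⟩
    obtain ⟨C, hC, hmin⟩ := Finset.lt_wf.has_min fam hne
    have hmcs : IsMCS Sf x C :=
      ⟨hC.2, fun C' hC' hsat' =>
        hmin C' ⟨subset_trans hC'.subset hC.1, hsat'⟩ hC'⟩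
    obtain ⟨i, hi⟩ := hhit C hmcs
    have h1 := (Finset.mem_inter.mp hi).1
    have h2 := hC.1 (Finset.mem_inter.mp hi).2
    rw [Finset.mem_compl] at h2
    exact h2 h1

theorem stmt6 {n : ℕ} (f : (Fin n → Bool) → Bool)
    (Sf : Finset (Finset (Fin n × Bool)))
    (hequiv : ∀ x : Fin n → Bool, f x = true ↔ SatCNF x Sf)
    (x : Fin n → Bool) (hx : f x = false) (S : Finset (Fin n)) :
    IsMUS Sf x S ↔ (HitsAllMCS Sf x S ∧ ∀ S' ⊂ S, ¬ HitsAllMCS Sf x S') := by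
  constructor
  · rintro ⟨h1, h2⟩
    exact ⟨(keyA Sf x S).mp h1,
      fun S' hS' hhit => (keyA Sf x S').mpr hhit (h2 S' hS')⟩
  · rintro ⟨h1, h2⟩
    refine ⟨(keyA Sf x S).mpr h1, fun S' hS' => ?_⟩
    by_contra hns
    exact h2 S' hS' ((keyA Sf x S').mp hns)
end

section
/- Let f be equivalent to CNF Σ_f and f(x) = false. Then the set of all counterfactual subsets of x (minimal S with f(x[S]) = true) coincides with the set of MCSes of (Σ_f, Σ_x), assuming f(x[S]) = true implies the existence of the witnessing assignment and conversely the minimality conditions align: concretely, if S is minimal with f(x[S]) = true, then S is minimal with 'some assignment agreeing with x outside S is classified true'. -/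
lemma aux_key {n : ℕ} (f : (Fin n → Bool) → Bool)
    (Sf : Finset (Finset (Fin n × Bool)))
    (hequiv : ∀ x : Fin n → Bool, f x = true ↔ SatCNF x Sf)
    (x : Fin n → Bool) (S : Finset (Fin n)) :
    CNFSat (Sf ∪ unitClauses x Sᶜ) ↔ ∃ T ⊆ S, f (flipS x T) = true := by
  constructor
  · rintro ⟨y, hy⟩
    have hout : ∀ i ∉ S, y i = x i := by
      intro i hi
      have hc : ({(i, x i)} : Finset (Fin n × Bool)) ∈ Sf ∪ unitClauses x Sᶜ := by
        apply Finset.mem_union_right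
        exact Finset.mem_image.2 ⟨i, Finset.mem_compl.2 hi, rfl⟩
      obtain ⟨l, hl, hval⟩ := hy _ hc
      simp only [Finset.mem_singleton] at hl
      subst hl; exact hval
    refine ⟨S.filter (fun i => y i ≠ x i), Finset.filter_subset _ _, ?_⟩
    have hyeq : flipS x (S.filter (fun i => y i ≠ x i)) = y := by
      funext i
      simp only [flipS, Finset.mem_filter]
      by_cases hS : i ∈ S
      · by_cases hne : y i = x i
        · simp [hS, hne]
        · simp only [hS, hne, true_and, ne_eq, not_false_eq_true, if_true]
          revert hne; cases y i <;> cases x i <;> simp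
      · simp [hS, hout i hS]
    rw [hyeq, hequiv]
    intro c hc
    exact hy c (Finset.mem_union_left _ hc)
  · rintro ⟨T, hTS, hT⟩
    refine ⟨flipS x T, fun c hc => ?_⟩
    rcases Finset.mem_union.1 hc with h | h
    · exact (hequiv _).1 hT c h
    · obtain ⟨i, hi, rfl⟩ := Finset.mem_image.1 h
      refine ⟨(i, x i), Finset.mem_singleton_self _, ?_⟩
      have : i ∉ T := fun hiT => (Finset.mem_compl.1 hi) (hTS hiT)
      simp [flipS, this]

theorem stmt17 {n : ℕ} (f : (Fin n → Bool) → Bool)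
    (Sf : Finset (Finset (Fin n × Bool)))
    (hequiv : ∀ x : Fin n → Bool, f x = true ↔ SatCNF x Sf)
    (x : Fin n → Bool) (hx : f x = false) (S : Finset (Fin n)) :
    (f (flipS x S) = true ∧ ∀ S' ⊂ S, f (flipS x S') ≠ true) ↔
      (CNFSat (Sf ∪ unitClauses x Sᶜ) ∧
        ∀ S' ⊂ S, ¬ CNFSat (Sf ∪ unitClauses x S'ᶜ)) := by
  constructor
  · rintro ⟨h1, h2⟩
    refine ⟨(aux_key f Sf hequiv x S).2 ⟨S, Finset.Subset.refl _, h1⟩, ?_⟩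
    intro S' hS' hsat
    obtain ⟨T, hTS', hT⟩ := (aux_key f Sf hequiv x S').1 hsat
    exact h2 T (lt_of_le_of_lt hTS' hS') hT
  · rintro ⟨h1, h2⟩
    obtain ⟨T, hTS, hT⟩ := (aux_key f Sf hequiv x S).1 h1
    have hTeq : T = S := by
      by_contra hne
      exact h2 T (lt_of_le_of_ne hTS hne)
        ((aux_key f Sf hequiv x T).2 ⟨T, Finset.Subset.refl _, hT⟩)
    refine ⟨hTeq ▸ hT, fun S' hS' hf => h2 S' hS' ?_⟩
    exact (aux_key f Sf hequiv x S').2 ⟨S', Finset.Subset.refl _, hf⟩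
end
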